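/- Assume the Hypothesis. Then for every nonzero a ∈ K and x ∈ O, 1 + x − x/f(a) ∈ f(K). -/

import Mathlib

open scoped Classical

/-- The cross-ratio `[a,b;c,d]` on the projective line `F ∪ {∞}` (modelled as
`Option F`, with `none` playing the role of `∞`), with the usual conventions
at `∞`; junk value `0` when two or more of the arguments are `∞`. -/
noncomputable def crossRatio {F : Type*} [Field F] :
    Option F → Option F → Option F → Option F → F
  | none,   some b, some c, some d => (d - b) / (c - b)
  | some a, none,   some c, some d => (c - a) / (d - a)
  | some a, some b, none,   some d => (d - b) / (d - a)
  | some a, some b, some c, none   => (c - a) / (c - b)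
  | some a, some b, some c, some d => ((c - a) / (c - b)) * ((d - b) / (d - a))
  | _, _, _, _ => 0

/-- A permutation `f` of the projective line is `O`-preserving if for all
quadruples of distinct points, `[a,b;c,d] ∈ O ↔ [f a, f b; f c, f d] ∈ O`. -/
def OPreserving {F : Type*} [Field F] (O : Set F) (f : Equiv.Perm (Option F)) : Prop :=
  ∀ a b c d : Option F, a ≠ b → a ≠ c → a ≠ d → b ≠ c → b ≠ d → c ≠ d →
    (crossRatio a b c d ∈ O ↔ crossRatio (f a) (f b) (f c) (f d) ∈ O)

/-- The map `F → F` induced by a permutation of `F ∪ {∞}` fixing `∞`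
(junk value `0` if `f` maps a finite point to `∞`). -/
noncomputable def fmap {F : Type*} [Field F] (f : Equiv.Perm (Option F)) (a : F) : F :=
  (f (some a)).getD 0

/-!
Since `f` preserves `O` and fixes `∞`, the set `S = f(K ∪ {∞})` is closed under solving
`[α, β; γ, w] = x` for `w`, whenever `α, β, γ ∈ S` and `x ∈ O`: the preimages satisfy
`[α', β'; γ', w'] ∈ O ⊆ K`, and the fourth point of a quadruple is a rational function over `K`
of the other three and of their cross-ratio. Starting from `∞, 0, 1` and `A = f(a)`, three such
steps produce `u = (A - x)/(1 - x)`, then `u/A`, and finally `u/A + x(1 - u/A) = 1 + x - x/A`.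
-/

section

variable {F : Type*} [Field F]

theorem distinct_of_crossRatio_ne_zero_ne_one {a b c d : Option F}
    (h0 : crossRatio a b c d ≠ 0) (h1 : crossRatio a b c d ≠ 1) :
    a ≠ b ∧ a ≠ c ∧ a ≠ d ∧ b ≠ c ∧ b ≠ d ∧ c ≠ d := by
  rcases a with _ | a <;> rcases b with _ | b <;> rcases c with _ | c <;> rcases d with _ | d <;>
    refine ⟨?_, ?_, ?_, ?_, ?_, ?_⟩ <;> rintro ⟨⟩ <;>
    simp_all [crossRatio, sub_eq_zero]

theorem crossRatio_none_some_some_add_mul_sub {b c : F} (x : F) (hbc : b ≠ c) :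
    crossRatio none (some b) (some c) (some (b + x * (c - b))) = x := by
  have : c - b ≠ 0 := sub_ne_zero.mpr hbc.symm
  simp only [crossRatio]
  field_simp
  ring

theorem crossRatio_some_some_none_sub_mul_div {a b x : F} (hab : a ≠ b) (hx : x ≠ 1) :
    crossRatio (some a) (some b) none (some ((b - x * a) / (1 - x))) = x := by
  have hx1 : 1 - x ≠ 0 := sub_ne_zero.mpr hx.symm
  have hba : b - a ≠ 0 := sub_ne_zero.mpr hab.symm
  have e1 : (b - x * a) / (1 - x) - b = x * (b - a) / (1 - x) := by field_simp; ring
  have e2 : (b - x * a) / (1 - x) - a = (b - a) / (1 - x) := by field_simp; ring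
  simp only [crossRatio, e1, e2]
  field_simp

theorem crossRatio_zero_one_div {u A : F} (hu : u ≠ 0) (hA : A ≠ 0) :
    crossRatio (some 0) (some 1) (some u) (some (u / A)) =
      crossRatio (some 1) (some A) none (some u) := by
  have e : (u / A - 1) / (u / A) = (u - A) / u := by field_simp
  simp only [crossRatio, sub_zero, e]
  rw [div_mul_div_comm, mul_comm (u - 1), mul_div_mul_left _ _ hu]

namespace Subfield

variable (K : Subfield F)

def projLine : Set (Option F) := {p | ∀ x ∈ p, x ∈ K}

@[simp] theorem none_mem_projLine : none ∈ K.projLine := by simp [projLine]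

@[simp] theorem some_mem_projLine {x : F} : some x ∈ K.projLine ↔ x ∈ K := by simp [projLine]

variable {K}

theorem mem_of_mul_sub_eq_sub {a b z ω : F} (ha : a ∈ K) (hb : b ∈ K) (hz : z ∈ K) (hab : a ≠ b)
    (h : z * (ω - a) = ω - b) : ω ∈ K := by
  have hz1 : 1 - z ≠ 0 := fun h1 => hab (by linear_combination -(ω - a) * h1 - h)
  have key : ω = (b - z * a) / (1 - z) := by
    rw [eq_div_iff hz1]
    linear_combination -h
  rw [key]
  exact div_mem (sub_mem hb (mul_mem hz ha)) (sub_mem (one_mem _) hz)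

theorem mem_projLine_of_crossRatio_mem {α β γ w : Option F} (hα : α ∈ K.projLine)
    (hβ : β ∈ K.projLine) (hγ : γ ∈ K.projLine) (hK : crossRatio α β γ w ∈ K)
    (h0 : crossRatio α β γ w ≠ 0) (h1 : crossRatio α β γ w ≠ 1) : w ∈ K.projLine := by
  obtain ⟨hαβ, hαγ, hαw, hβγ, -, -⟩ := distinct_of_crossRatio_ne_zero_ne_one h0 h1
  rcases w with _ | ω
  · exact K.none_mem_projLine
  rw [some_mem_projLine]
  rcases α with _ | a <;> rcases β with _ | b <;> rcases γ with _ | c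
  any_goals exact absurd rfl ‹_›
  · rw [some_mem_projLine] at hβ hγ
    have hcb : c - b ≠ 0 := sub_ne_zero.mpr fun h => hβγ (by rw [h])
    have key : ω = b + crossRatio none (some b) (some c) (some ω) * (c - b) := by
      simp only [crossRatio]
      field_simp
      ring
    rw [key]
    exact add_mem hβ (mul_mem hK (sub_mem hγ hβ))
  · rw [some_mem_projLine] at hα hγ
    have hωa : ω - a ≠ 0 := sub_ne_zero.mpr fun h => hαw (by rw [h])
    have hca : c - a ≠ 0 := sub_ne_zero.mpr fun h => hαγ (by rw [h])
    have key : ω = a + (c - a) / crossRatio (some a) none (some c) (some ω) := by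
      simp only [crossRatio]
      field_simp
      ring
    rw [key]
    exact add_mem hα (div_mem (sub_mem hγ hα) hK)
  · rw [some_mem_projLine] at hα hβ
    have hωa : ω - a ≠ 0 := sub_ne_zero.mpr fun h => hαw (by rw [h])
    refine mem_of_mul_sub_eq_sub hα hβ hK (fun h => hαβ (by rw [h])) ?_
    simp only [crossRatio]
    field_simp
  · rw [some_mem_projLine] at hα hβ hγ
    have hωa : ω - a ≠ 0 := sub_ne_zero.mpr fun h => hαw (by rw [h])
    have hca : c - a ≠ 0 := sub_ne_zero.mpr fun h => hαγ (by rw [h])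
    have hcb : c - b ≠ 0 := sub_ne_zero.mpr fun h => hβγ (by rw [h])
    refine mem_of_mul_sub_eq_sub hα hβ
      (div_mem (mul_mem hK (sub_mem hγ hβ)) (sub_mem hγ hα)) (fun h => hαβ (by rw [h])) ?_
    simp only [crossRatio]
    field_simp

end Subfield

section OPreserving

variable {O : Set F} {f : Equiv.Perm (Option F)}

theorem OPreserving.crossRatio_mem_of_map_mem (hf : OPreserving O f) (hO : ∀ x ∈ O, x ≠ 0 ∧ x ≠ 1)
    {a b c d : Option F} (h : crossRatio (f a) (f b) (f c) (f d) ∈ O) : crossRatio a b c d ∈ O := by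
  obtain ⟨hab, hac, had, hbc, hbd, hcd⟩ := distinct_of_crossRatio_ne_zero_ne_one (hO _ h).1 (hO _ h).2
  simp only [f.injective.ne_iff] at hab hac had hbc hbd hcd
  exact (hf a b c d hab hac had hbc hbd hcd).mpr h

theorem OPreserving.mem_image_projLine_of_crossRatio_mem (hf : OPreserving O f)
    (hO : ∀ x ∈ O, x ≠ 0 ∧ x ≠ 1) {K : Subfield F} (hOK : O ⊆ K) {α β γ w : Option F}
    (hα : α ∈ f '' K.projLine) (hβ : β ∈ f '' K.projLine) (hγ : γ ∈ f '' K.projLine)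
    (hw : crossRatio α β γ w ∈ O) : w ∈ f '' K.projLine := by
  obtain ⟨α, hα, rfl⟩ := hα
  obtain ⟨β, hβ, rfl⟩ := hβ
  obtain ⟨γ, hγ, rfl⟩ := hγ
  rw [← f.apply_symm_apply w] at hw ⊢
  have h := hf.crossRatio_mem_of_map_mem hO hw
  exact Set.mem_image_of_mem f
    (Subfield.mem_projLine_of_crossRatio_mem hα hβ hγ (hOK h) (hO _ h).1 (hO _ h).2)

theorem apply_some_eq_some_fmap (hinf : f none = none) (a : F) : f (some a) = some (fmap f a) := by
  cases h : f (some a) with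
  | none => exact absurd (f.injective (h.trans hinf.symm)) (Option.some_ne_none a)
  | some v => simp [fmap, h]

theorem mem_image_fmap_of_some_mem_image_projLine (hinf : f none = none) {K : Subfield F} {t : F}
    (ht : some t ∈ f '' K.projLine) : t ∈ fmap f '' K := by
  obtain ⟨_ | k, hk, hkt⟩ := ht
  · exact absurd (hinf.symm.trans hkt) (Option.some_ne_none t).symm
  · exact ⟨k, (Subfield.some_mem_projLine K).mp hk, by simp [fmap, hkt]⟩

end OPreserving

def CrossRatioClosed (S : Set (Option F)) (x : F) : Prop :=
  ∀ ⦃α β γ w⦄, α ∈ S → β ∈ S → γ ∈ S → crossRatio α β γ w = x → w ∈ S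

theorem CrossRatioClosed.some_one_add_sub_div_mem {S : Set (Option F)} {x A : F}
    (hS : CrossRatioClosed S x) (hx0 : x ≠ 0) (hx1 : x ≠ 1) (hinf : none ∈ S) (h0 : some 0 ∈ S)
    (h1 : some 1 ∈ S) (hA : some A ∈ S) (hA0 : A ≠ 0) : some (1 + x - x / A) ∈ S := by
  by_cases hA1 : A = 1
  · rwa [hA1, div_one, add_sub_cancel_right]
  by_cases hAx : A = x
  · rw [hAx, div_self hx0, add_sub_cancel_left]
    simpa using hS hinf h0 h1 (crossRatio_none_some_some_add_mul_sub x zero_ne_one)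
  set u := (A - x * 1) / (1 - x) with hu_def
  have hu : some u ∈ S := hS h1 hA hinf (crossRatio_some_some_none_sub_mul_div (Ne.symm hA1) hx1)
  have hu0 : u ≠ 0 := div_ne_zero (by simpa [sub_eq_zero]) (sub_ne_zero.mpr (Ne.symm hx1))
  have huA : some (u / A) ∈ S := hS h0 h1 hu (by
    rw [crossRatio_zero_one_div hu0 hA0]
    exact crossRatio_some_some_none_sub_mul_div (Ne.symm hA1) hx1)
  have huA1 : u / A ≠ 1 := by
    rw [Ne, div_eq_one_iff_eq hA0, hu_def, div_eq_iff (sub_ne_zero.mpr (Ne.symm hx1))]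
    intro h
    rcases mul_eq_zero.mp (show x * (A - 1) = 0 by linear_combination h) with h | h
    exacts [hx0 h, hA1 (sub_eq_zero.mp h)]
  have ht := hS hinf huA h1 (crossRatio_none_some_some_add_mul_sub x huA1)
  convert ht using 2
  rw [hu_def]
  field_simp
  ring

end

theorem second_closure_two_general {F : Type*} [Field F]
    (O : Set F) (hO : ∀ x ∈ O, x ≠ 0 ∧ x ≠ 1)
    (f : Equiv.Perm (Option F)) (hf : OPreserving O f)
    (hinf : f none = none) (h0 : f (some 0) = some 0) (h1 : f (some 1) = some 1) :
    ∀ a ∈ Subfield.closure O, a ≠ 0 → ∀ x ∈ O,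
      1 + x - x / fmap f a ∈ fmap f '' (Subfield.closure O : Set F) := by
  intro a ha ha0 x hx
  have hfa := apply_some_eq_some_fmap hinf a
  have hA0 : fmap f a ≠ 0 := fun h => ha0 <| Option.some_injective _ <| f.injective <| by
    rw [hfa, h, h0]
  refine mem_image_fmap_of_some_mem_image_projLine hinf <|
    CrossRatioClosed.some_one_add_sub_div_mem ?_ (hO x hx).1 (hO x hx).2 ⟨none, by simp, hinf⟩
      ⟨some 0, by simp, h0⟩ ⟨some 1, by simp, h1⟩ ⟨some a, by simpa, hfa⟩ hA0
  intro α β γ w hα hβ hγ hw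
  exact hf.mem_image_projLine_of_crossRatio_mem hO Subfield.subset_closure hα hβ hγ (hw ▸ hx)

/-- Here `Subfield.closure O` is the subfield `K = k(O)` of `F` generated by `O`
(over the prime field `k`), and `fmap f '' K` is the image `f(K)` of `K` under `f`. -/
theorem second_closure_two {F : Type*} [Field F]
    (O : Set F) (hne : O.Nonempty) (hO : ∀ x ∈ O, x ≠ 0 ∧ x ≠ 1)
    (f : Equiv.Perm (Option F)) (hf : OPreserving O f)
    (hinf : f none = none) (h0 : f (some 0) = some 0) (h1 : f (some 1) = some 1) :
    ∀ a ∈ Subfield.closure O, a ≠ 0 → ∀ x ∈ O,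
      1 + x - x / fmap f a ∈ fmap f '' (Subfield.closure O : Set F) :=
  second_closure_two_general O hO f hf hinf h0 h1
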